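/- Let x = X_1 be the generating operator of the complex group algebra of the free group F_N on N ≥ 1 generators, and let τ be the canonical trace (coefficient at the identity). For every m ≥ 1 and all sequences k_1, …, k_m ≥ 0 and n_1, …, n_m ≥ 1, τ( x^{k_1}·X_{n_1}·x^{k_2}·X_{n_2}···x^{k_m}·X_{n_m} ) = τ( x^{k_1+⋯+k_m} · X_{n_1}·X_{n_2}···X_{n_m} ). -/

import Mathlib

/-!
Both sides are already equal in `ℂ[F_N]`, because `x` commutes with every `X_n`. The coefficient
of `x X_n` at `w` counts the letters `s` with `|s⁻¹ w| = n`, that of `X_n x` the letters with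
`|w s⁻¹| = |s w⁻¹| = n`. Multiplying a nontrivial reduced word on the left by a letter shortens it
for exactly one letter (the inverse of its first letter) and lengthens it for all the others, so
these counts depend only on `|w| = |w⁻¹|`.
-/

/-- `Xop N n` is the operator `X_n`: the sum, in the complex group algebra
`ℂ[F_N] = MonoidAlgebra ℂ (FreeGroup (Fin N))`, of the basis elements of all
words `w` whose reduced word has length `n`. Note `Xop N 0 = 1`. -/
noncomputable def Xop (N n : ℕ) : MonoidAlgebra ℂ (FreeGroup (Fin N)) :=
  ∑ᶠ w ∈ {w : FreeGroup (Fin N) | (FreeGroup.toWord w).length = n},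
    MonoidAlgebra.of ℂ (FreeGroup (Fin N)) w

/-- The canonical trace `τ` on `ℂ[F_N]`: the coefficient at the identity. -/
noncomputable def tr {N : ℕ} (a : MonoidAlgebra ℂ (FreeGroup (Fin N))) : ℂ := a.coeff 1

namespace FreeGroup

variable {α : Type*}

theorem finite_setOf_length_toWord_eq [Finite α] [DecidableEq α] (n : ℕ) :
    {w : FreeGroup α | (toWord w).length = n}.Finite := by
  refine Set.Finite.of_finite_image ((List.finite_length_eq _ n).subset ?_) toWord_injective.injOn
  rintro _ ⟨w, hw, rfl⟩
  exact hw

theorem inv_mk_singleton (p : α × Bool) : (mk [p])⁻¹ = mk [(p.1, !p.2)] := by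
  simp [inv_mk, invRev]

variable [DecidableEq α]

theorem norm_eq_one_iff {w : FreeGroup α} : norm w = 1 ↔ ∃ p, mk [p] = w := by
  rw [norm, List.length_eq_one_iff]
  constructor
  · rintro ⟨p, hp⟩
    exact ⟨p, by rw [← hp, mk_toWord]⟩
  · rintro ⟨p, rfl⟩
    exact ⟨p, by rw [toWord_mk, reduce_singleton]⟩

theorem mk_singleton_injective : Function.Injective fun p : α × Bool => mk [p] := fun p q h => by
  simpa [toWord_mk] using congrArg toWord h

theorem norm_mk_singleton_mul_of_toWord_eq_cons {w : FreeGroup α} {q : α × Bool}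
    {L : List (α × Bool)} (hw : w.toWord = q :: L) (p : α × Bool) :
    norm (mk [p] * w) = if p = (q.1, !q.2) then L.length else L.length + 2 := by
  have hmul : mk [p] * w = mk (p :: q :: L) := by rw [← mk_toWord (x := w), hw, mul_mk]; rfl
  have hred : reduce (q :: L) = q :: L := hw ▸ reduce_toWord w
  rw [norm, hmul, toWord_mk, reduce.cons, hred]
  by_cases hp : p = (q.1, !q.2)
  · simp [hp]
  · have hcancel : ¬(p.1 = q.1 ∧ p.2 = !q.2) := fun h => hp (Prod.ext h.1 h.2)
    simp [hp, hcancel]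

variable [Fintype α] {M : Type*} [AddCommMonoid M]

theorem sum_norm_mk_singleton_mul_congr (f : ℕ → M) {v w : FreeGroup α} (h : norm v = norm w) :
    ∑ p, f (norm (mk [p] * v)) = ∑ p, f (norm (mk [p] * w)) := by
  rcases hv : v.toWord with _ | ⟨q, L⟩ <;> rcases hw : w.toWord with _ | ⟨q', L'⟩
  · rw [toWord_eq_nil_iff] at hv hw
    rw [hv, hw]
  · simp [norm, hv, hw] at h
  · simp [norm, hv, hw] at h
  · have hL : L.length = L'.length := by simpa [norm, hv, hw] using h
    -- the swap exchanges the unique letters that cancel against `v` and against `w`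
    refine Fintype.sum_equiv (Equiv.swap (q.1, !q.2) (q'.1, !q'.2)) _ _ fun p => ?_
    simp only [norm_mk_singleton_mul_of_toWord_eq_cons hv,
      norm_mk_singleton_mul_of_toWord_eq_cons hw, Equiv.swap_apply_eq_iff,
      Equiv.swap_apply_right, hL]

theorem sum_norm_inv_mk_singleton_mul (f : ℕ → M) (w : FreeGroup α) :
    ∑ p, f (norm ((mk [p])⁻¹ * w)) = ∑ p, f (norm (mk [p] * w)) :=
  Fintype.sum_equiv ((Equiv.refl α).prodCongr Equiv.boolNot) _ _ fun p => by
    rw [inv_mk_singleton]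
    rfl

theorem sum_norm_mul_inv_mk_singleton (f : ℕ → M) (w : FreeGroup α) :
    ∑ p, f (norm (w * (mk [p])⁻¹)) = ∑ p, f (norm (mk [p] * w)) := by
  have hinv (p : α × Bool) : norm (w * (mk [p])⁻¹) = norm (mk [p] * w⁻¹) := by
    rw [← norm_inv_eq, mul_inv_rev, inv_inv]
  simp only [hinv]
  exact sum_norm_mk_singleton_mul_congr f norm_inv_eq

end FreeGroup

theorem List.prod_ofFn_pow_mul_of_commute {M : Type*} [Monoid M] {a : M} {m : ℕ} (k : Fin m → ℕ)
    (b : Fin m → M) (h : ∀ j, Commute a (b j)) :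
    (List.ofFn fun j => a ^ k j * b j).prod = a ^ (∑ j, k j) * (List.ofFn b).prod := by
  induction m with
  | zero => simp
  | succ m ih =>
    rw [List.ofFn_succ, List.prod_cons, ih _ _ fun j => h j.succ, Fin.sum_univ_succ, pow_add,
      List.ofFn_succ, List.prod_cons]
    simp only [mul_assoc, ((h 0).pow_left _).left_comm]

open FreeGroup MonoidAlgebra

theorem coeff_Xop (N n : ℕ) (w : FreeGroup (Fin N)) :
    (Xop N n).coeff w = if norm w = n then 1 else 0 := by
  rw [Xop, finsum_mem_eq_finite_toFinset_sum _ (finite_setOf_length_toWord_eq n), coeff_sum,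
    Finsupp.finsetSum_apply]
  simp only [of_apply, coeff_single, Finsupp.single_apply, Finset.sum_ite_eq',
    Set.Finite.mem_toFinset, Set.mem_ofPred_eq]
  rfl

theorem Xop_one_eq_sum (N : ℕ) : Xop N 1 = ∑ p, single (mk [p]) 1 := by
  have : {w : FreeGroup (Fin N) | (toWord w).length = 1} = Set.range fun p => mk [p] :=
    Set.ext fun _ => norm_eq_one_iff
  rw [Xop, this, finsum_mem_range mk_singleton_injective, finsum_eq_sum_of_fintype]
  simp only [of_apply]

theorem commute_Xop_one (N n : ℕ) : Commute (Xop N 1) (Xop N n) := by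
  show _ * _ = _ * _
  ext w
  rw [Xop_one_eq_sum, Finset.sum_mul, Finset.mul_sum, coeff_sum, coeff_sum,
    Finsupp.finsetSum_apply, Finsupp.finsetSum_apply]
  simp only [coeff_single_mul_apply, coeff_mul_single_apply, coeff_Xop, one_mul, mul_one]
  rw [sum_norm_inv_mk_singleton_mul (fun l => if l = n then (1 : ℂ) else 0),
    sum_norm_mul_inv_mk_singleton (fun l => if l = n then (1 : ℂ) else 0)]

theorem stmt_15_general (N : ℕ) (m : ℕ)
    (k n : Fin m → ℕ) :
    tr (List.ofFn (fun j => (Xop N 1) ^ (k j) * Xop N (n j))).prod =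
      tr ((Xop N 1) ^ (∑ j, k j) * (List.ofFn (fun j => Xop N (n j))).prod) := by
  rw [List.prod_ofFn_pow_mul_of_commute k _ fun j => commute_Xop_one N (n j)]

theorem stmt_15 (N : ℕ) (hN : 1 ≤ N) (m : ℕ) (hm : 1 ≤ m)
    (k n : Fin m → ℕ) (hn : ∀ j, 1 ≤ n j) :
    tr (List.ofFn (fun j => (Xop N 1) ^ (k j) * Xop N (n j))).prod =
      tr ((Xop N 1) ^ (∑ j, k j) * (List.ofFn (fun j => Xop N (n j))).prod) :=
  stmt_15_general N m k n
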